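/- arXiv:2603.28873 — 7 statements merged into one kernel-verified Lean document; each statement's English description precedes it below -/
import Mathlib

section
/- Fix n ≥ 2 and 1 ≤ i ≤ n−1. Define x* ∈ ℝ^n by x*_i = x*_{i+1} = c/(2−ε) and x*_k = 0 for k ∉ {i, i+1}. Then (a) x* = [W x* + θ]_+, i.e. x* is an equilibrium of the CSTLN; (b) y_i(x*) = y_{i+1}(x*) = c/(2−ε) > 0; (c) if i ≥ 2 then y_{i−1}(x*) = −cδ/(2−ε) < 0 and if i ≤ n−2 then y_{i+2}(x*) = −cδ/(2−ε) < 0; (d) for every k with min(|k−i|, |k−(i+1)|) > 1, y_k(x*) = c(−ε−2δ)/(2−ε) < 0. In particular x* lies in the interior cell conditions of C_{{i,i+1}}: y_j(x*) > 0 for j ∈ {i,i+1} and y_k(x*) < 0 for k ∉ {i,i+1}. -/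
open Matrix

/-- double-support attractor of a CSTLN.
Indices are 0-based: the support is `{i, i+1}` with `i + 1 < n`
(corresponding to the 1-based statement `1 ≤ i ≤ n−1`). -/
theorem cstln_double_support_attractor (n i : ℕ) (hn : 2 ≤ n) (hi : i + 1 < n)
    (ε δ c : ℝ) (hε : 0 < ε) (hε1 : ε < 1) (hδ : 0 < δ) (hc : 0 < c)
    (W : Matrix (Fin n) (Fin n) ℝ)
    (hW : ∀ k l : Fin n, W k l =
      if (k : ℕ) = (l : ℕ) then 0
      else if ((k : ℤ) - (l : ℤ)).natAbs = 1 then -1 + ε else -1 - δ)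
    (θ : Fin n → ℝ) (hθ : ∀ k, θ k = c)
    (xs : Fin n → ℝ)
    (hxs : ∀ k : Fin n, xs k = if (k : ℕ) = i ∨ (k : ℕ) = i + 1 then c / (2 - ε) else 0)
    (y : Fin n → ℝ) (hy : ∀ k, y k = W.mulVec xs k + θ k) :
    -- (a) x* is an equilibrium of the CSTLN
    (∀ k, xs k = max (y k) 0) ∧
    -- (b) on-support values of y
    (y ⟨i, by omega⟩ = c / (2 - ε) ∧ y ⟨i + 1, by omega⟩ = c / (2 - ε) ∧
      0 < c / (2 - ε)) ∧
    -- (c) immediate neighbours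
    (∀ _ : 1 ≤ i, y ⟨i - 1, by omega⟩ = -(c * δ) / (2 - ε) ∧ y ⟨i - 1, by omega⟩ < 0) ∧
    (∀ _ : i + 2 < n, y ⟨i + 2, by omega⟩ = -(c * δ) / (2 - ε) ∧ y ⟨i + 2, by omega⟩ < 0) ∧
    -- (d) indices at distance > 1 from {i, i+1}
    (∀ k : Fin n, 1 < min ((k : ℤ) - (i : ℤ)).natAbs ((k : ℤ) - ((i : ℤ) + 1)).natAbs →
      y k = c * (-ε - 2 * δ) / (2 - ε) ∧ y k < 0) ∧
    -- in particular, x* satisfies the interior cell conditions of C_{i,i+1}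
    (∀ k : Fin n, ((k : ℕ) = i ∨ (k : ℕ) = i + 1) → 0 < y k) ∧
    (∀ k : Fin n, ¬((k : ℕ) = i ∨ (k : ℕ) = i + 1) → y k < 0) := by
  have h2ε : (0:ℝ) < 2 - ε := by linarith
  have h2ε' : (2 - ε : ℝ) ≠ 0 := ne_of_gt h2ε
  have ha : 0 < c / (2 - ε) := div_pos hc h2ε
  set i0 : Fin n := ⟨i, by omega⟩ with hi0
  set i1 : Fin n := ⟨i + 1, by omega⟩ with hi1
  have hne : i0 ≠ i1 := by simp [hi0, hi1, Fin.ext_iff]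
  have hsum : ∀ k : Fin n, y k = (W k i0 + W k i1) * (c / (2 - ε)) + c := by
    intro k
    rw [hy, hθ, Matrix.mulVec, dotProduct]
    have hz : ∀ l : Fin n, l ≠ i0 ∧ l ≠ i1 → W k l * xs l = 0 := by
      rintro l ⟨h0, h1⟩
      have : xs l = 0 := by
        rw [hxs]
        rw [if_neg]
        rintro (h | h)
        · exact h0 (Fin.ext h)
        · exact h1 (Fin.ext h)
      rw [this, mul_zero]
    rw [Fintype.sum_eq_add i0 i1 hne hz]
    rw [hxs i0, hxs i1]
    simp [hi0, hi1]
    ring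
  -- entries of W
  have hval : ∀ k : Fin n, ¬((k:ℕ) = i ∨ (k:ℕ) = i + 1) →
      (W k i0 + W k i1 = -2 + ε - δ ∧ (((k:ℤ) - i).natAbs = 1 ∨ ((k:ℤ) - (i+1)).natAbs = 1))
      ∨ (W k i0 + W k i1 = -2 - 2*δ ∧ 1 < ((k:ℤ) - i).natAbs ∧ 1 < ((k:ℤ) - (i+1)).natAbs) := by
    intro k hk
    push_neg at hk
    rw [hW k i0, hW k i1]
    simp only [hi0, hi1]
    by_cases h1 : ((k:ℤ) - i).natAbs = 1
    · left
      constructor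
      · rw [if_neg (by omega), if_pos (by omega), if_neg (by omega), if_neg (by omega)]
        ring
      · exact Or.inl h1
    · by_cases h2 : ((k:ℤ) - (i+1:ℕ)).natAbs = 1
      · left
        constructor
        · rw [if_neg (by omega), if_neg (by omega), if_neg (by omega), if_pos (by omega)]
          ring
        · right; push_cast at h2 ⊢; omega
      · right
        refine ⟨?_, by omega, by push_cast at h2 ⊢; omega⟩
        rw [if_neg (by omega), if_neg (by omega), if_neg (by omega), if_neg (by omega)]
        ring
  have hon : ∀ k : Fin n, ((k:ℕ) = i ∨ (k:ℕ) = i + 1) → y k = c / (2 - ε) := by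
    intro k hk
    rw [hsum k, hW k i0, hW k i1]
    simp only [hi0, hi1]
    rcases hk with h | h
    · rw [if_pos (by omega), if_neg (by omega), if_pos (by omega)]
      field_simp
      ring
    · rw [if_neg (by omega), if_pos (by omega), if_pos (by omega)]
      field_simp
      ring
  have hnear : ∀ k : Fin n, ¬((k:ℕ) = i ∨ (k:ℕ) = i + 1) →
      (((k:ℤ) - i).natAbs = 1 ∨ ((k:ℤ) - (i+1:ℤ)).natAbs = 1) →
      y k = -(c * δ) / (2 - ε) := by
    intro k hk hd
    rcases hval k hk with ⟨hv, _⟩ | ⟨hv, hd1, hd2⟩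
    · rw [hsum k, hv]; field_simp; ring
    · exfalso; push_cast at hd; omega
  have hfar : ∀ k : Fin n, ¬((k:ℕ) = i ∨ (k:ℕ) = i + 1) →
      ¬(((k:ℤ) - i).natAbs = 1 ∨ ((k:ℤ) - (i+1:ℤ)).natAbs = 1) →
      y k = c * (-ε - 2 * δ) / (2 - ε) := by
    intro k hk hd
    rcases hval k hk with ⟨hv, hd'⟩ | ⟨hv, _, _⟩
    · exfalso; apply hd; push_cast; push_cast at hd'; omega
    · rw [hsum k, hv]; field_simp; ring
  have hnegnear : -(c * δ) / (2 - ε) < 0 := by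
    apply div_neg_of_neg_of_pos _ h2ε; nlinarith
  have hnegfar : c * (-ε - 2 * δ) / (2 - ε) < 0 := by
    apply div_neg_of_neg_of_pos _ h2ε; nlinarith
  have hoff : ∀ k : Fin n, ¬((k:ℕ) = i ∨ (k:ℕ) = i + 1) → y k < 0 := by
    intro k hk
    by_cases hd : (((k:ℤ) - i).natAbs = 1 ∨ ((k:ℤ) - (i+1:ℤ)).natAbs = 1)
    · rw [hnear k hk hd]; exact hnegnear
    · rw [hfar k hk hd]; exact hnegfar
  refine ⟨?_, ⟨hon i0 (Or.inl rfl), hon i1 (Or.inr rfl), ha⟩, ?_, ?_, ?_, ?_, hoff⟩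
  · intro k
    by_cases hk : ((k:ℕ) = i ∨ (k:ℕ) = i + 1)
    · rw [hxs, if_pos hk, hon k hk, max_eq_left (le_of_lt ha)]
    · rw [hxs, if_neg hk, max_eq_right (le_of_lt (hoff k hk))]
  · intro h1
    have he : y ⟨i - 1, by omega⟩ = -(c * δ) / (2 - ε) := by
      apply hnear
      · simp only [Fin.val_mk]; omega
      · left; simp only [Fin.val_mk]; push_cast; omega
    exact ⟨he, he ▸ hnegnear⟩
  · intro h1
    have he : y ⟨i + 2, by omega⟩ = -(c * δ) / (2 - ε) := by
      apply hnear
      · simp only [Fin.val_mk]; omega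
      · right; simp only [Fin.val_mk]; push_cast; omega
    exact ⟨he, he ▸ hnegnear⟩
  · intro k hk
    have h1 : 1 < ((k:ℤ) - i).natAbs := lt_of_lt_of_le hk (min_le_left _ _)
    have h2 : 1 < ((k:ℤ) - ((i:ℤ)+1)).natAbs := lt_of_lt_of_le hk (min_le_right _ _)
    have he : y k = c * (-ε - 2 * δ) / (2 - ε) := by
      apply hfar
      · push_neg; constructor <;> omega
      · push_neg; constructor <;> omega
    exact ⟨he, he ▸ hnegfar⟩
  · intro k hk
    rw [hon k hk]; exact ha
end

section
/- Let ε ∈ (0,1), δ > 0, and set a := −1+ε, b := −1−δ. Consider the 3×3 symmetric matrix J = [[−1, a, b], [a, −1, a], [b, a, −1]]. Then: (a) the vector (1, 0, −1) is an eigenvector of J with eigenvalue δ > 0; (b) the other two eigenvalues of J are λ± = −1 + (b ± √(b² + 8a²))/2, i.e. the characteristic polynomial of J factors as (X − δ)(X − λ₊)(X − λ₋); (c) λ₊ < 0 and λ₋ < 0. Hence J has exactly one strictly positive eigenvalue and two strictly negative eigenvalues, so the corresponding equilibrium of the CSTLN is a hyperbolic saddle point. -/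
/-!
`J` is a symmetric Toeplitz matrix `!![d, a, b; a, d, a; b, a, d]` with `d = -1`. Reversing the
coordinates commutes with it, so `J` splits along the antisymmetric vector `(1, 0, -1)`, with
eigenvalue `d - b = δ`, and the symmetric plane spanned by `(1, 0, 1)` and `(0, 1, 0)`, on which it
acts by `!![d + b, a; 2 * a, d]`. The two eigenvalues of that block have sum `2d + b = -3 - δ < 0`
and product `d (d + b) - 2a² = 2 + δ - 2a² > 0` (as `|a| < 1`), so both are negative.
-/

open Matrix Polynomial

section SymmToeplitz3

variable {R : Type*} [CommRing R]

def symmToeplitz3 (d a b : R) : Matrix (Fin 3) (Fin 3) R :=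
  !![d, a, b; a, d, a; b, a, d]

theorem symmToeplitz3_mulVec_one_zero_neg_one (d a b : R) :
    symmToeplitz3 d a b *ᵥ ![1, 0, -1] = (d - b) • ![1, 0, -1] := by
  ext i
  fin_cases i <;> simp [symmToeplitz3, mulVec, dotProduct, Fin.sum_univ_three] <;> ring

theorem symmToeplitz3_charpoly (d a b : R) :
    (symmToeplitz3 d a b).charpoly =
      (X - C (d - b)) * (X ^ 2 - C (2 * d + b) * X + C (d * (d + b) - 2 * a ^ 2)) := by
  rw [Matrix.charpoly, Matrix.det_fin_three]
  simp only [symmToeplitz3, Fin.isValue, charmatrix_apply_eq, of_apply, cons_val', cons_val_zero,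
    cons_val_fin_one, cons_val_one, cons_val, ne_eq, Fin.reduceEq, not_false_eq_true, charmatrix_apply_ne,
    mul_neg, neg_mul, neg_neg, map_sub, map_add, map_mul, map_ofNat, map_pow]
  ring

theorem quadratic_eq_mul_of_vieta {r₁ r₂ p q : R} (hsum : r₁ + r₂ = p) (hprod : r₁ * r₂ = q) :
    X ^ 2 - C p * X + C q = (X - C r₁) * (X - C r₂) := by
  rw [← hsum, ← hprod, map_add, map_mul]
  ring

end SymmToeplitz3

theorem neg_and_neg_of_add_neg_of_mul_pos {α : Type*} [Ring α] [LinearOrder α]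
    [IsStrictOrderedRing α] {x y : α} (hsum : x + y < 0) (hprod : 0 < x * y) :
    x < 0 ∧ y < 0 :=
  (pos_and_pos_or_neg_and_neg_of_mul_pos hprod).resolve_left fun ⟨hx, hy⟩ => (add_pos hx hy).not_gt hsum

/-- For `ε ∈ (0,1)`, `δ > 0`, `a = −1+ε`, `b = −1−δ`, the matrix
`J = [[−1,a,b],[a,−1,a],[b,a,−1]]` has eigenvector `(1,0,−1)` with eigenvalue
`δ > 0`, its characteristic polynomial factors as `(X−δ)(X−λ₊)(X−λ₋)` with
`λ± = −1 + (b ± √(b²+8a²))/2`, and `λ₊ < 0`, `λ₋ < 0`. -/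
theorem triple_support_jacobian_saddle (ε δ : ℝ) (hε : 0 < ε) (hε1 : ε < 1)
    (hδ : 0 < δ) (a b : ℝ) (ha : a = -1 + ε) (hb : b = -1 - δ)
    (J : Matrix (Fin 3) (Fin 3) ℝ)
    (hJ : J = !![-1, a, b; a, -1, a; b, a, -1])
    (lp lm : ℝ)
    (hlp : lp = -1 + (b + Real.sqrt (b ^ 2 + 8 * a ^ 2)) / 2)
    (hlm : lm = -1 + (b - Real.sqrt (b ^ 2 + 8 * a ^ 2)) / 2) :
    -- (a) (1,0,−1) is an eigenvector with eigenvalue δ > 0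
    (J.mulVec ![1, 0, -1] = δ • ![(1 : ℝ), 0, -1] ∧ 0 < δ) ∧
    -- (b) the characteristic polynomial factors accordingly
    (J.charpoly = (X - C δ) * (X - C lp) * (X - C lm)) ∧
    -- (c) the other two eigenvalues are strictly negative
    (lp < 0 ∧ lm < 0) := by
  have hJ' : J = symmToeplitz3 (-1) a b := hJ
  have hδb : -1 - b = δ := by rw [hb]; ring
  have hs : Real.sqrt (b ^ 2 + 8 * a ^ 2) ^ 2 = b ^ 2 + 8 * a ^ 2 := Real.sq_sqrt (by positivity)
  have hsum : lp + lm = 2 * -1 + b := by rw [hlp, hlm]; ring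
  have hprod : lp * lm = -1 * (-1 + b) - 2 * a ^ 2 := by
    rw [hlp, hlm]; linear_combination (-1 / 4 : ℝ) * hs
  have ha2 : a ^ 2 < 1 := by rw [ha]; nlinarith
  refine ⟨⟨?_, hδ⟩, ?_, neg_and_neg_of_add_neg_of_mul_pos ?_ ?_⟩
  · rw [hJ', symmToeplitz3_mulVec_one_zero_neg_one, hδb]
  · rw [hJ', symmToeplitz3_charpoly, hδb, quadratic_eq_mul_of_vieta hsum hprod, mul_assoc]
  · rw [hsum, hb]; linarith
  · rw [hprod, hb]; linarith
end

section
/- Let ε ∈ (0,1), δ > 0, c > 0, and suppose there exist real numbers α ≥ 0 and β ≥ 0 satisfying the three feasibility conditions: (i) α ≤ c + 2(−1+ε)β, (ii) (−1+ε)α + c ≤ β, (iii) α ≥ c/(1+δ). Then necessarily ε ≥ 1/2. In other words, the feasibility conditions defining the forward-invariant set R_FI can only be satisfied when the CSTLN parameter ε lies in [1/2, 1). -/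
/-!
Adding conditions (i) and (ii) eliminates `c` and leaves `ε α ≤ (2ε - 1) β`. For `ε < 1/2`
both sides have opposite signs, so `α = β = 0`, and then (ii) reads `c ≤ 0`.
-/

theorem half_le_of_mul_le_two_mul_sub_one_mul {ε α β : ℝ} (hε : 0 < ε) (hα : 0 ≤ α)
    (hβ : 0 ≤ β) (hαβ : 0 < α + β) (h : ε * α ≤ (2 * ε - 1) * β) : 1 / 2 ≤ ε := by
  by_contra! hlt
  have hεα : 0 ≤ ε * α := mul_nonneg hε.le hα
  have hβ0 : β = 0 := le_antisymm (nonpos_of_mul_nonneg_right (hεα.trans h) (by linarith)) hβ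
  rw [hβ0, mul_zero] at h
  have hα0 : α = 0 := le_antisymm (nonpos_of_mul_nonpos_right h hε) hα
  linarith

theorem cstln_feasibility_forces_eps_ge_half_general (ε c α β : ℝ)
    (hε : 0 < ε) (hc : 0 < c)
    (hα : 0 ≤ α) (hβ : 0 ≤ β)
    (h1 : α ≤ c + 2 * (-1 + ε) * β)
    (h2 : (-1 + ε) * α + c ≤ β) :
    1 / 2 ≤ ε := by
  have hsum : ε * α ≤ (2 * ε - 1) * β := by linarith
  have hαβ : 0 < α + β := by
    by_contra! hle
    have hα0 : α = 0 := by linarith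
    rw [hα0, mul_zero, zero_add] at h2
    linarith
  exact half_le_of_mul_le_two_mul_sub_one_mul hε hα hβ hαβ hsum

/-- If `ε ∈ (0,1)`, `δ > 0`, `c > 0`, and there exist `α, β ≥ 0`
satisfying the feasibility conditions (i) `α ≤ c + 2(−1+ε)β`,
(ii) `(−1+ε)α + c ≤ β`, (iii) `α ≥ c/(1+δ)`, then necessarily `ε ≥ 1/2`. -/
theorem cstln_feasibility_forces_eps_ge_half (ε δ c α β : ℝ)
    (hε : 0 < ε) (hε1 : ε < 1) (hδ : 0 < δ) (hc : 0 < c)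
    (hα : 0 ≤ α) (hβ : 0 ≤ β)
    (h1 : α ≤ c + 2 * (-1 + ε) * β)
    (h2 : (-1 + ε) * α + c ≤ β)
    (h3 : c / (1 + δ) ≤ α) :
    1 / 2 ≤ ε :=
  cstln_feasibility_forces_eps_ge_half_general ε c α β hε hc hα hβ h1 h2
end

section
/- Let ε ∈ (0,1), δ > 0, c > 0, and let α ≥ 0, β ≥ 0 satisfy the feasibility conditions (i) α ≤ c + 2(−1+ε)β, (ii) (−1+ε)α + c ≤ β, (iii) α ≥ c/(1+δ). Then: (a) α ≤ α_max where α_max := c(1−2ε)/(1+2ε²−4ε); (b) α_max ≤ c/(2−ε); hence α ≤ c/(2−ε); and moreover (c) β ≥ c/(2−ε). -/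
/-- Under the feasibility conditions (i) `α ≤ c + 2(−1+ε)β`,
(ii) `(−1+ε)α + c ≤ β`, (iii) `α ≥ c/(1+δ)` with `ε ∈ (0,1)`, `δ > 0`, `c > 0`,
`α, β ≥ 0`, one has (a) `α ≤ α_max := c(1−2ε)/(1+2ε²−4ε)`,
(b) `α_max ≤ c/(2−ε)`, hence `α ≤ c/(2−ε)`, and (c) `β ≥ c/(2−ε)`. -/
theorem cstln_feasibility_alpha_beta_bounds (ε δ c α β : ℝ)
    (hε : 0 < ε) (hε1 : ε < 1) (hδ : 0 < δ) (hc : 0 < c)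
    (hα : 0 ≤ α) (hβ : 0 ≤ β)
    (h1 : α ≤ c + 2 * (-1 + ε) * β)
    (h2 : (-1 + ε) * α + c ≤ β)
    (h3 : c / (1 + δ) ≤ α) :
    α ≤ c * (1 - 2 * ε) / (1 + 2 * ε ^ 2 - 4 * ε) ∧
    c * (1 - 2 * ε) / (1 + 2 * ε ^ 2 - 4 * ε) ≤ c / (2 - ε) ∧
    α ≤ c / (2 - ε) ∧
    c / (2 - ε) ≤ β := by
  have hαpos : 0 < α := lt_of_lt_of_le (div_pos hc (by linarith)) h3
  have h2e : (0:ℝ) < 2 - ε := by linarith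
  -- β * (1 - 2*(1-ε)^2) ≥ c * (1-ε) : from h1, h2
  have hkey : c * ε ≤ β * (1 - 2 * (1 - ε) ^ 2) := by
    nlinarith [mul_le_mul_of_nonneg_left h1 (by linarith : (0:ℝ) ≤ 1 - ε)]
  have hD : 1 + 2 * ε ^ 2 - 4 * ε < 0 := by
    by_contra hD'
    push_neg at hD'
    nlinarith [mul_nonneg hβ hD']
  -- (a): D * α ≥ c * (1 - 2ε)
  have ha : α ≤ c * (1 - 2 * ε) / (1 + 2 * ε ^ 2 - 4 * ε) := by
    rw [le_div_iff_of_neg hD]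
    nlinarith [mul_le_mul_of_nonneg_left h2 (by linarith : (0:ℝ) ≤ 2 * (1 - ε))]
  have hb : c * (1 - 2 * ε) / (1 + 2 * ε ^ 2 - 4 * ε) ≤ c / (2 - ε) := by
    rw [div_le_iff_of_neg hD, div_mul_eq_mul_div, div_le_iff₀ h2e]
    nlinarith
  have hab : α ≤ c / (2 - ε) := le_trans ha hb
  refine ⟨ha, hb, hab, ?_⟩
  rw [le_div_iff₀ h2e] at hab
  rw [div_le_iff₀ h2e]
  nlinarith [mul_le_mul_of_nonneg_left hab (by linarith : (0:ℝ) ≤ 1 - ε)]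
end

section
/- Fix n ≥ 3 and 2 ≤ i ≤ n−1, and define w ∈ ℝ^n by: w_{i−1} = 1, w_i = 0, w_{i+1} = −1, w_{i−2} = (δ+ε)/(1+δ) (if i−2 ≥ 1), w_{i+2} = −(δ+ε)/(1+δ) (if i+2 ≤ n), and w_k = 0 for all other k. Then for every x ∈ ℝ^n whose output y := Wx + θ satisfies y_j ≥ 0 for j ∈ {i−1, i, i+1} and y_k ≤ 0 for k ∉ {i−1, i, i+1} (i.e. x lies in the triple-support cell C_{{i−1,i,i+1}}), the vector field of the CSTLN satisfies w^⊤(−x + [y]_+) = δ · (w^⊤ x). Consequently, along any solution of ẋ = −x + [Wx+θ]_+ remaining in C_{{i−1,i,i+1}}, the scalar φ(x) := w^⊤x obeys φ̇ = δ φ. -/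
/-! On the cell where exactly `i-1, i, i+1` are active, `[y]₊` vanishes off these three
coordinates, and there `w` is `1, 0, -1`; so `w ⬝ᵥ [y]₊ = y_{i-1} - y_{i+1}`. The bias cancels in
this difference, leaving `(W_{i-1} - W_{i+1}) ⬝ᵥ x`. Rows `i-1` and `i+1` of `W` differ by
`±(1 + δ)` at `i ∓ 1`, by `±(δ + ε)` at `i ∓ 2` and agree elsewhere, i.e. they differ by exactly
`(1 + δ) w`. Hence `w ⬝ᵥ (-x + [y]₊) = (1 + δ) w ⬝ᵥ x - w ⬝ᵥ x = δ w ⬝ᵥ x`. -/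

open Matrix

section Cell

variable {ι : Type*} [Fintype ι] {T : ι → Prop} {a b : ι} {w y : ι → ℝ}

theorem sum_mul_relu_eq_sub_of_cell (hab : a ≠ b) (hTa : T a) (hTb : T b)
    (hwa : w a = 1) (hwb : w b = -1) (hwT : ∀ j, T j → j ≠ a → j ≠ b → w j = 0)
    (hpos : ∀ j, T j → 0 ≤ y j) (hneg : ∀ j, ¬T j → y j ≤ 0) :
    ∑ j, w j * max (y j) 0 = y a - y b := by
  rw [Fintype.sum_eq_add a b hab, hwa, hwb, max_eq_left (hpos a hTa), max_eq_left (hpos b hTb)]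
  · ring
  rintro j ⟨hja, hjb⟩
  by_cases hTj : T j
  · rw [hwT j hTj hja hjb, zero_mul]
  · rw [max_eq_right (hneg j hTj), mul_zero]

theorem sum_mul_vectorField_eq_of_cell {W : Matrix ι ι ℝ} {x : ι → ℝ} {c δ : ℝ}
    (hrow : ∀ l, W a l - W b l = (1 + δ) * w l)
    (hab : a ≠ b) (hTa : T a) (hTb : T b)
    (hwa : w a = 1) (hwb : w b = -1) (hwT : ∀ j, T j → j ≠ a → j ≠ b → w j = 0)
    (hpos : ∀ j, T j → 0 ≤ (W *ᵥ x) j + c) (hneg : ∀ j, ¬T j → (W *ᵥ x) j + c ≤ 0) :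
    ∑ j, w j * (-(x j) + max ((W *ᵥ x) j + c) 0) = δ * ∑ j, w j * x j := by
  have hrelu : ∑ j, w j * max ((W *ᵥ x) j + c) 0 = (1 + δ) * ∑ j, w j * x j :=
    calc ∑ j, w j * max ((W *ᵥ x) j + c) 0
        = ((W *ᵥ x) a + c) - ((W *ᵥ x) b + c) :=
          sum_mul_relu_eq_sub_of_cell hab hTa hTb hwa hwb hwT hpos hneg
      _ = (W a - W b) ⬝ᵥ x := by rw [sub_dotProduct, add_sub_add_right_eq_sub]; rfl
      _ = (1 + δ) * ∑ j, w j * x j := by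
        simp only [dotProduct, Pi.sub_apply, hrow, Finset.mul_sum, mul_assoc]
  simp only [mul_add, Finset.sum_add_distrib, hrelu, mul_neg, Finset.sum_neg_distrib]
  ring

end Cell

theorem hasDerivAt_sum_mul {ι : Type*} [Fintype ι] {w : ι → ℝ} {x : ℝ → ι → ℝ} {x' : ι → ℝ}
    {t : ℝ} (hx : ∀ j, HasDerivAt (fun s => x s j) (x' j) t) :
    HasDerivAt (fun s => ∑ j, w j * x s j) (∑ j, w j * x' j) t :=
  HasDerivAt.fun_sum fun j _ => (hx j).const_mul (w j)

theorem cstln_row_sub_row {n i : ℕ} {ε δ : ℝ} {W : Matrix (Fin n) (Fin n) ℝ} {w : Fin n → ℝ}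
    (hW : ∀ k l : Fin n, W k l =
      if (k : ℕ) = (l : ℕ) then 0
      else if ((k : ℤ) - (l : ℤ)).natAbs = 1 then -1 + ε else -1 - δ)
    (hw : ∀ k : Fin n, w k =
      if (k : ℕ) = i - 1 then 1
      else if (k : ℕ) = i + 1 then -1
      else if (k : ℕ) + 2 = i then (δ + ε) / (1 + δ)
      else if (k : ℕ) = i + 2 then -((δ + ε) / (1 + δ))
      else 0)
    (hi : 1 ≤ i) (hδ : 1 + δ ≠ 0) {a b : Fin n} (ha : (a : ℕ) = i - 1) (hb : (b : ℕ) = i + 1)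
    (l : Fin n) : W a l - W b l = (1 + δ) * w l := by
  rw [hW, hW, hw, ha, hb]
  split_ifs <;> first | (exfalso; omega) | (field_simp; try ring)

theorem cstln_triple_cell_unstable_eigcoordinate_general (n i : ℕ)
    (hi1 : 1 ≤ i) (hi2 : i + 1 < n)
    (ε δ c : ℝ) (hδ : 0 < δ)
    (W : Matrix (Fin n) (Fin n) ℝ)
    (hW : ∀ k l : Fin n, W k l =
      if (k : ℕ) = (l : ℕ) then 0
      else if ((k : ℤ) - (l : ℤ)).natAbs = 1 then -1 + ε else -1 - δ)
    (w : Fin n → ℝ)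
    (hw : ∀ k : Fin n, w k =
      if (k : ℕ) = i - 1 then 1
      else if (k : ℕ) = i + 1 then -1
      else if (k : ℕ) + 2 = i then (δ + ε) / (1 + δ)
      else if (k : ℕ) = i + 2 then -((δ + ε) / (1 + δ))
      else 0) :
    -- algebraic identity on the triple-support cell
    (∀ x : Fin n → ℝ,
      (∀ j : Fin n, ((j : ℕ) = i - 1 ∨ (j : ℕ) = i ∨ (j : ℕ) = i + 1) →
        0 ≤ W.mulVec x j + c) →
      (∀ k : Fin n, ¬((k : ℕ) = i - 1 ∨ (k : ℕ) = i ∨ (k : ℕ) = i + 1) →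
        W.mulVec x k + c ≤ 0) →
      (∑ j, w j * (-(x j) + max (W.mulVec x j + c) 0)) = δ * ∑ j, w j * x j) ∧
    -- consequence along solutions of `ẋ = −x + [Wx + θ]₊` inside the cell
    (∀ (x : ℝ → Fin n → ℝ) (t : ℝ),
      (∀ j : Fin n, HasDerivAt (fun s => x s j)
        (-(x t j) + max (W.mulVec (x t) j + c) 0) t) →
      (∀ j : Fin n, ((j : ℕ) = i - 1 ∨ (j : ℕ) = i ∨ (j : ℕ) = i + 1) →
        0 ≤ W.mulVec (x t) j + c) →
      (∀ k : Fin n, ¬((k : ℕ) = i - 1 ∨ (k : ℕ) = i ∨ (k : ℕ) = i + 1) →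
        W.mulVec (x t) k + c ≤ 0) →
      HasDerivAt (fun s => ∑ j, w j * x s j) (δ * ∑ j, w j * x t j) t) := by
  let a : Fin n := ⟨i - 1, by omega⟩
  let b : Fin n := ⟨i + 1, hi2⟩
  have hab : a ≠ b := fun h => by simp only [a, b, Fin.mk.injEq] at h; omega
  have hrow := cstln_row_sub_row hW hw hi1 (by positivity) (a := a) (b := b) rfl rfl
  have hwa : w a = 1 := by rw [hw, if_pos rfl]
  have hwb : w b = -1 := by rw [hw, if_neg (by simp only [b]; omega), if_pos rfl]
  have hwi : ∀ j : Fin n, (j : ℕ) = i → w j = 0 := fun j hj => by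
    rw [hw]; simp only [hj]; split_ifs <;> first | omega | rfl
  have hcell := fun x hpos hneg => sum_mul_vectorField_eq_of_cell (c := c) (x := x)
    (T := fun j : Fin n => (j : ℕ) = i - 1 ∨ (j : ℕ) = i ∨ (j : ℕ) = i + 1) hrow hab
    (Or.inl rfl) (Or.inr (Or.inr rfl)) hwa hwb
    (fun j hj hja hjb =>
      hwi j ((hj.resolve_left (Fin.val_ne_of_ne hja)).resolve_right (Fin.val_ne_of_ne hjb)))
    hpos hneg
  exact ⟨hcell, fun x t hx hpos hneg => (hasDerivAt_sum_mul hx).congr_deriv (hcell _ hpos hneg)⟩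

/-- With `w` the left eigenvector (eigenvalue `δ`) of the
triple-support-cell Jacobian, for every `x` in the triple-support cell
`C_{i−1,i,i+1}` the CSTLN vector field satisfies `wᵀ(−x + [y]₊) = δ (wᵀ x)`;
consequently along any solution remaining in the cell, `φ(x) = wᵀx` obeys
`φ̇ = δ φ`. Indices are 0-based: `1 ≤ i` and `i + 1 < n` correspond to the
1-based statement `2 ≤ i ≤ n−1`. -/
theorem cstln_triple_cell_unstable_eigcoordinate (n i : ℕ) (hn : 3 ≤ n)
    (hi1 : 1 ≤ i) (hi2 : i + 1 < n)
    (ε δ c : ℝ) (hε : 0 < ε) (hε1 : ε < 1) (hδ : 0 < δ) (hc : 0 < c)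
    (W : Matrix (Fin n) (Fin n) ℝ)
    (hW : ∀ k l : Fin n, W k l =
      if (k : ℕ) = (l : ℕ) then 0
      else if ((k : ℤ) - (l : ℤ)).natAbs = 1 then -1 + ε else -1 - δ)
    (w : Fin n → ℝ)
    (hw : ∀ k : Fin n, w k =
      if (k : ℕ) = i - 1 then 1
      else if (k : ℕ) = i + 1 then -1
      else if (k : ℕ) + 2 = i then (δ + ε) / (1 + δ)
      else if (k : ℕ) = i + 2 then -((δ + ε) / (1 + δ))
      else 0) :
    -- algebraic identity on the triple-support cell
    (∀ x : Fin n → ℝ,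
      (∀ j : Fin n, ((j : ℕ) = i - 1 ∨ (j : ℕ) = i ∨ (j : ℕ) = i + 1) →
        0 ≤ W.mulVec x j + c) →
      (∀ k : Fin n, ¬((k : ℕ) = i - 1 ∨ (k : ℕ) = i ∨ (k : ℕ) = i + 1) →
        W.mulVec x k + c ≤ 0) →
      (∑ j, w j * (-(x j) + max (W.mulVec x j + c) 0)) = δ * ∑ j, w j * x j) ∧
    -- consequence along solutions of `ẋ = −x + [Wx + θ]₊` inside the cell
    (∀ (x : ℝ → Fin n → ℝ) (t : ℝ),
      (∀ j : Fin n, HasDerivAt (fun s => x s j)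
        (-(x t j) + max (W.mulVec (x t) j + c) 0) t) →
      (∀ j : Fin n, ((j : ℕ) = i - 1 ∨ (j : ℕ) = i ∨ (j : ℕ) = i + 1) →
        0 ≤ W.mulVec (x t) j + c) →
      (∀ k : Fin n, ¬((k : ℕ) = i - 1 ∨ (k : ℕ) = i ∨ (k : ℕ) = i + 1) →
        W.mulVec (x t) k + c ≤ 0) →
      HasDerivAt (fun s => ∑ j, w j * x s j) (δ * ∑ j, w j * x t j) t) :=
  cstln_triple_cell_unstable_eigcoordinate_general n i hi1 hi2 ε δ c hδ W hW w hw
end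

section
/- Fix n ≥ 3 and 2 ≤ i ≤ n−1, and define w ∈ ℝ^n by: w_{i−1} = 1, w_i = 0, w_{i+1} = −1, w_{i−2} = (δ+ε)/(1+δ) (if i−2 ≥ 1), w_{i+2} = −(δ+ε)/(1+δ) (if i+2 ≤ n), and w_k = 0 for all other k. Then for every x ∈ ℝ^n whose output y := Wx + θ satisfies y_k ≤ 0 for all k ≠ i (i.e. x lies in the single-support cell C_{{i}}), the vector field of the CSTLN satisfies w^⊤(−x + [y]_+) = −(w^⊤ x). Consequently, along any solution of ẋ = −x + [Wx+θ]_+ remaining in C_{{i}}, the scalar φ(x) := w^⊤x obeys φ̇ = −φ. -/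
open Matrix

/-!
On the cell `C_{i}` every output other than `y_i` is nonpositive, so `[y]₊` is supported at `i`;
since the weight vector `w` vanishes at `i`, `wᵀ[y]₊ = 0` and hence `wᵀ(−x + [y]₊) = −wᵀx`.
The decay of `φ = wᵀx` then follows from linearity of differentiation.
-/

theorem sum_mul_neg_add_max_zero_eq_neg_sum {ι : Type*} [Fintype ι] (w x y : ι → ℝ)
    (hy : ∀ j, w j ≠ 0 → y j ≤ 0) :
    ∑ j, w j * (-(x j) + max (y j) 0) = -∑ j, w j * x j := by
  rw [← Finset.sum_neg_distrib]
  refine Finset.sum_congr rfl fun j _ => ?_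
  by_cases hw : w j = 0
  · simp [hw]
  · rw [max_eq_right (hy j hw)]
    ring

theorem HasDerivAt.sum_const_mul {ι : Type*} [Fintype ι] (w : ι → ℝ) {x : ℝ → ι → ℝ}
    {v : ι → ℝ} {t : ℝ} (hx : ∀ j, HasDerivAt (fun s => x s j) (v j) t) :
    HasDerivAt (fun s => ∑ j, w j * x s j) (∑ j, w j * v j) t :=
  HasDerivAt.fun_sum fun j _ => (hx j).const_mul (w j)

/-- The weights of the statement, with `a = (δ + ε)/(1 + δ)`. -/
def chainEigWeight (i : ℕ) (a : ℝ) (k : ℕ) : ℝ :=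
  if k = i - 1 then 1
  else if k = i + 1 then -1
  else if k + 2 = i then a
  else if k = i + 2 then -a
  else 0

theorem chainEigWeight_self {i : ℕ} (hi : 1 ≤ i) (a : ℝ) : chainEigWeight i a i = 0 := by
  unfold chainEigWeight
  split_ifs <;> first | omega | rfl

theorem cstln_single_cell_eigcoordinate_decay_general (n i : ℕ)
    (hi1 : 1 ≤ i)
    (ε δ c : ℝ)
    (W : Matrix (Fin n) (Fin n) ℝ)
    (w : Fin n → ℝ)
    (hw : ∀ k : Fin n, w k =
      if (k : ℕ) = i - 1 then 1
      else if (k : ℕ) = i + 1 then -1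
      else if (k : ℕ) + 2 = i then (δ + ε) / (1 + δ)
      else if (k : ℕ) = i + 2 then -((δ + ε) / (1 + δ))
      else 0) :
    -- algebraic identity on the single-support cell C_{i}
    (∀ x : Fin n → ℝ,
      (∀ k : Fin n, (k : ℕ) ≠ i → W.mulVec x k + c ≤ 0) →
      (∑ j, w j * (-(x j) + max (W.mulVec x j + c) 0)) = -(∑ j, w j * x j)) ∧
    -- consequence along solutions of `ẋ = −x + [Wx + θ]₊` inside C_{i}
    (∀ (x : ℝ → Fin n → ℝ) (t : ℝ),
      (∀ j : Fin n, HasDerivAt (fun s => x s j)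
        (-(x t j) + max (W.mulVec (x t) j + c) 0) t) →
      (∀ k : Fin n, (k : ℕ) ≠ i → W.mulVec (x t) k + c ≤ 0) →
      HasDerivAt (fun s => ∑ j, w j * x s j) (-(∑ j, w j * x t j)) t) := by
  have hsupp : ∀ k : Fin n, w k ≠ 0 → (k : ℕ) ≠ i := by
    rintro k hk rfl
    exact hk ((hw k).trans (chainEigWeight_self hi1 _))
  have hcell : ∀ x : Fin n → ℝ, (∀ k : Fin n, (k : ℕ) ≠ i → W.mulVec x k + c ≤ 0) →
      ∑ j, w j * (-(x j) + max (W.mulVec x j + c) 0) = -∑ j, w j * x j :=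
    fun x hx => sum_mul_neg_add_max_zero_eq_neg_sum w x _ fun j hj => hx j (hsupp j hj)
  refine ⟨hcell, fun x t hderiv hx => ?_⟩
  rw [← hcell (x t) hx]
  exact HasDerivAt.sum_const_mul w hderiv

/-- With `w` the left eigenvector of the triple-support-cell
Jacobian, for every `x` in the single-support cell `C_{i}` (i.e. `y_k ≤ 0` for
all `k ≠ i`) the CSTLN vector field satisfies `wᵀ(−x + [y]₊) = −(wᵀ x)`;
consequently along any solution remaining in `C_{i}`, `φ(x) = wᵀx` obeys
`φ̇ = −φ`. Indices are 0-based: `1 ≤ i` and `i + 1 < n` correspond to the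
1-based statement `2 ≤ i ≤ n−1`. -/
theorem cstln_single_cell_eigcoordinate_decay (n i : ℕ) (hn : 3 ≤ n)
    (hi1 : 1 ≤ i) (hi2 : i + 1 < n)
    (ε δ c : ℝ) (hε : 0 < ε) (hε1 : ε < 1) (hδ : 0 < δ) (hc : 0 < c)
    (W : Matrix (Fin n) (Fin n) ℝ)
    (hW : ∀ k l : Fin n, W k l =
      if (k : ℕ) = (l : ℕ) then 0
      else if ((k : ℤ) - (l : ℤ)).natAbs = 1 then -1 + ε else -1 - δ)
    (w : Fin n → ℝ)
    (hw : ∀ k : Fin n, w k =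
      if (k : ℕ) = i - 1 then 1
      else if (k : ℕ) = i + 1 then -1
      else if (k : ℕ) + 2 = i then (δ + ε) / (1 + δ)
      else if (k : ℕ) = i + 2 then -((δ + ε) / (1 + δ))
      else 0) :
    -- algebraic identity on the single-support cell C_{i}
    (∀ x : Fin n → ℝ,
      (∀ k : Fin n, (k : ℕ) ≠ i → W.mulVec x k + c ≤ 0) →
      (∑ j, w j * (-(x j) + max (W.mulVec x j + c) 0)) = -(∑ j, w j * x j)) ∧
    -- consequence along solutions of `ẋ = −x + [Wx + θ]₊` inside C_{i}
    (∀ (x : ℝ → Fin n → ℝ) (t : ℝ),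
      (∀ j : Fin n, HasDerivAt (fun s => x s j)
        (-(x t j) + max (W.mulVec (x t) j + c) 0) t) →
      (∀ k : Fin n, (k : ℕ) ≠ i → W.mulVec (x t) k + c ≤ 0) →
      HasDerivAt (fun s => ∑ j, w j * x s j) (-(∑ j, w j * x t j)) t) :=
  cstln_single_cell_eigcoordinate_decay_general n i hi1 ε δ c W w hw
end

section
/- Let W ∈ ℝ^{n×n} be symmetric and θ ∈ ℝ^n, and define the energy function V(x) := (1/2) x^⊤(I − W)x − θ^⊤x. Then: (a) the gradient of V is ∇V(x) = x − (Wx + θ); (b) for every x ∈ ℝ^n with x_i ≥ 0 for all i, the derivative of V along the TLN vector field is nonpositive: ∇V(x)^⊤(−x + [Wx + θ]_+) = Σ_{i=1}^n (x_i − y_i)(−x_i + [y_i]_+) ≤ 0, where y = Wx + θ and [t]_+ = max(t,0). (Componentwise: for reals u ≥ 0 and v, (u − v)(−u + max(v,0)) ≤ 0.) -/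
/-!
In Euclidean coordinates `V x = ½ ⟪x, (I - W) x⟫ - ⟪θ, x⟫`. Since `I - W` is symmetric, the two
terms of the product rule for the quadratic part coincide, so the gradient is `(I - W) x - θ`.
The decrease along the flow is termwise: with `u = xᵢ ≥ 0` and `v = yᵢ`, the term is
`-(u - v)²` when `v ≥ 0` and `-u (u - v) ≤ 0` when `v ≤ 0`.
-/

open Matrix
open scoped RealInnerProductSpace

theorem hasGradientAt_half_inner_self_sub_inner {E : Type*} [NormedAddCommGroup E]
    [InnerProductSpace ℝ E] [CompleteSpace E] {T : E →L[ℝ] E}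
    (hT : (T : E →ₗ[ℝ] E).IsSymmetric) (θ x : E) :
    HasGradientAt (fun y => (1 / 2) * ⟪y, T y⟫ - ⟪θ, y⟫) (T x - θ) x := by
  rw [hasGradientAt_iff_hasFDerivAt]
  have hquad := ((hasFDerivAt_id x).inner ℝ T.hasFDerivAt).const_mul (1 / 2 : ℝ)
  refine (hquad.sub (innerSL ℝ θ).hasFDerivAt).congr_fderiv ?_
  ext h
  have hsymm : ⟪x, T h⟫ = ⟪T x, h⟫ := (hT x h).symm
  simp [fderivInnerCLM_apply, hsymm, real_inner_comm h]
  ring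

theorem toEuclideanCLM_isSymmetric {n : Type*} [Fintype n] [DecidableEq n]
    {A : Matrix n n ℝ} (hA : A.IsSymm) :
    (toEuclideanCLM (n := n) (𝕜 := ℝ) A : EuclideanSpace ℝ n →ₗ[ℝ] EuclideanSpace ℝ n).IsSymmetric :=
  isSymmetric_toEuclideanLin_iff.mpr (isHermitian_iff_isSymm.mpr hA)

theorem sub_mul_neg_add_max_zero_nonpos {u : ℝ} (hu : 0 ≤ u) (v : ℝ) :
    (u - v) * (-u + max v 0) ≤ 0 := by
  rcases le_total v 0 with hv | hv
  · rw [max_eq_right hv, add_zero]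
    exact mul_nonpos_of_nonneg_of_nonpos (by linarith) (neg_nonpos.mpr hu)
  · rw [max_eq_left hv, neg_add_eq_sub, ← neg_sub u v, mul_neg]
    exact neg_nonpos.mpr (mul_self_nonneg _)

/-- For symmetric `W` and the energy function
`V(x) = ½ xᵀ(I−W)x − θᵀx` on `ℝⁿ` (with the Euclidean inner product):
(a) the gradient of `V` at `x` is `x − (Wx + θ)`;
(b) on the nonnegative orthant the derivative of `V` along the TLN vector
field, `∑ i (x_i − y_i)(−x_i + [y_i]₊)`, is nonpositive; componentwise, for
reals `u ≥ 0` and `v`, `(u − v)(−u + max v 0) ≤ 0`. -/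
theorem tln_energy_gradient_and_decrease (n : ℕ)
    (W : Matrix (Fin n) (Fin n) ℝ) (hWsymm : W.IsSymm)
    (θ : Fin n → ℝ)
    (V : EuclideanSpace ℝ (Fin n) → ℝ)
    (hV : ∀ x : EuclideanSpace ℝ (Fin n),
      V x = (1 / 2) * (∑ i, x i * (x i - W.mulVec x i)) - ∑ i, θ i * x i) :
    -- (a) gradient of V
    (∀ x : EuclideanSpace ℝ (Fin n),
      HasGradientAt V
        (WithLp.toLp 2 (fun j => x j - (W.mulVec x j + θ j) : Fin n → ℝ) :
          EuclideanSpace ℝ (Fin n)) x) ∧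
    -- (b) decrease along the TLN vector field on the nonnegative orthant
    (∀ x : Fin n → ℝ, (∀ i, 0 ≤ x i) →
      (∑ i, (x i - (W.mulVec x i + θ i)) *
        (-(x i) + max (W.mulVec x i + θ i) 0)) ≤ 0) ∧
    -- componentwise inequality
    (∀ u v : ℝ, 0 ≤ u → (u - v) * (-u + max v 0) ≤ 0) := by
  set T := toEuclideanCLM (n := Fin n) (𝕜 := ℝ) (1 - W)
  have hT : (T : EuclideanSpace ℝ (Fin n) →ₗ[ℝ] _).IsSymmetric :=
    toEuclideanCLM_isSymmetric (isSymm_one.sub hWsymm)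
  have hVT : V = fun y => (1 / 2) * ⟪y, T y⟫ - ⟪WithLp.toLp 2 θ, y⟫ := by
    funext y
    simp [hV, T, PiLp.inner_apply, mul_comm]
  refine ⟨fun x => ?_, fun x hx => Finset.sum_nonpos fun i _ => ?_,
    fun u v hu => sub_mul_neg_add_max_zero_nonpos hu v⟩
  · convert hVT ▸ hasGradientAt_half_inner_self_sub_inner hT (WithLp.toLp 2 θ) x using 1
    ext j
    simp [T]
    ring
  · exact sub_mul_neg_add_max_zero_nonpos (hx i) _
end
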